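/- arXiv:2111.00691 — 3 statements merged into one kernel-verified Lean document; each statement's English description precedes it below -/
import Mathlib

section
/- Let d ≥ 1 and K ≥ 0 be integers, let N be a d×d real matrix, let w ∈ ℝ^d be a row vector, and let v ∈ ℝ^d be a column vector whose entries satisfy |v_j| ≤ 1 for every j. Define c_K(k) := (−1)^k · binom(K+1, k+1). Then |wᵀ v − Σ_{k=1}^{K+1} c_K(k−1) · wᵀ N^k v| ≤ (Σ_i |w_i|) · ‖I − N‖_∞^{K+1}, where ‖M‖_∞ denotes the matrix ∞-norm (the maximum over rows of the sum of absolute values of the entries in that row). (This is the gate-error-mitigation bound of Theorem 1, with w the Pauli-transfer-matrix row vector of the observable O, v the Pauli-transfer-matrix column vector of the state ρ, and N the Pauli transfer matrix of the noise channel.) -/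
/-!
By the binomial theorem, `wᵀv - ∑_{k=1}^{K+1} c_K(k-1) wᵀ N^k v = wᵀ (I - N)^{K+1} v`.
The matrix ∞-norm is the operator norm for the sup norm on vectors, hence submultiplicative,
and `|wᵀ u| ≤ (∑ i, |w i|) ‖u‖_∞`.
-/

open Matrix

/-- The matrix ∞-norm: the maximum over rows of the sum of absolute values of the
entries in that row. -/
noncomputable def matrixInfNorm {d : ℕ} (M : Matrix (Fin d) (Fin d) ℝ) : ℝ :=
  ⨆ i, ∑ j, |M i j|

theorem one_sub_pow_eq_one_sub_sum {R A : Type*} [CommRing R] [Ring A] [Algebra R A]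
    (x : A) (n : ℕ) :
    (1 - x) ^ n = 1 - ∑ k ∈ Finset.Icc 1 n, ((-1 : R) ^ (k - 1) * n.choose k) • x ^ k := by
  have binomial :
      (1 - x) ^ n = ∑ k ∈ Finset.range (n + 1), ((-1 : R) ^ k * n.choose k) • x ^ k := by
    rw [sub_eq_neg_add, (Commute.one_right (-x)).add_pow]
    refine Finset.sum_congr rfl fun k _ => ?_
    rw [neg_pow, one_pow, mul_one, Algebra.smul_def, map_mul, map_pow, map_neg, map_one,
      map_natCast, mul_assoc, mul_assoc, Nat.cast_comm]
  rw [binomial, Finset.range_eq_Ico, Finset.sum_eq_sum_Ico_succ_bot n.succ_pos, zero_add,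
    Nat.succ_eq_add_one, Finset.Ico_add_one_right_eq_Icc, sub_eq_add_neg,
    ← Finset.sum_neg_distrib]
  simp only [pow_zero, Nat.choose_zero_right, Nat.cast_one, mul_one, one_smul]
  congr 1
  refine Finset.sum_congr rfl fun k hk => ?_
  obtain ⟨j, rfl⟩ := Nat.exists_eq_add_of_le' (Finset.mem_Icc.mp hk).1
  rw [Nat.add_sub_cancel, pow_succ, ← neg_smul]
  congr 1
  ring

theorem abs_dotProduct_le {ι : Type*} [Fintype ι] (w u : ι → ℝ) :
    |w ⬝ᵥ u| ≤ (∑ i, |w i|) * ‖u‖ := by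
  rw [Finset.sum_mul]
  refine (Finset.abs_sum_le_sum_abs _ _).trans (Finset.sum_le_sum fun i _ => ?_)
  rw [abs_mul]
  exact mul_le_mul_of_nonneg_left (norm_le_pi_norm u i) (abs_nonneg _)

attribute [local instance] Matrix.linftyOpNormedAddCommGroup Matrix.linftyOpNormedRing

theorem matrixInfNorm_eq_linfty_opNorm {d : ℕ} (M : Matrix (Fin d) (Fin d) ℝ) :
    matrixInfNorm M = ‖M‖ := by
  rw [linfty_opNorm_def, Finset.sup_univ_eq_ciSup, NNReal.coe_iSup]
  simp [matrixInfNorm, NNReal.coe_sum, Real.norm_eq_abs]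

theorem gate_error_mitigation_general (d K : ℕ)
    (N : Matrix (Fin d) (Fin d) ℝ) (w v : Fin d → ℝ) (hv : ∀ j, |v j| ≤ 1) :
    |(w ⬝ᵥ v) - ∑ k ∈ Finset.Icc 1 (K + 1),
        ((-1 : ℝ) ^ (k - 1) * ((K + 1).choose k : ℝ)) * (w ⬝ᵥ (N ^ k).mulVec v)|
      ≤ (∑ i, |w i|) * matrixInfNorm (1 - N) ^ (K + 1) := by
  have expansion : w ⬝ᵥ ((1 - N) ^ (K + 1)) *ᵥ v = (w ⬝ᵥ v) - ∑ k ∈ Finset.Icc 1 (K + 1),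
      ((-1 : ℝ) ^ (k - 1) * ((K + 1).choose k : ℝ)) * (w ⬝ᵥ (N ^ k).mulVec v) := by
    simp only [one_sub_pow_eq_one_sub_sum (R := ℝ), sub_mulVec, one_mulVec, sum_mulVec,
      smul_mulVec, dotProduct_sub, dotProduct_sum, dotProduct_smul, smul_eq_mul]
  have hv_norm : ‖v‖ ≤ 1 :=
    (pi_norm_le_iff_of_nonneg zero_le_one).mpr fun j => (Real.norm_eq_abs _).trans_le (hv j)
  rw [← expansion, matrixInfNorm_eq_linfty_opNorm]
  calc |w ⬝ᵥ ((1 - N) ^ (K + 1)) *ᵥ v|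
      ≤ (∑ i, |w i|) * ‖((1 - N) ^ (K + 1)) *ᵥ v‖ := abs_dotProduct_le _ _
    _ ≤ (∑ i, |w i|) * (‖(1 - N) ^ (K + 1)‖ * ‖v‖) := by
        gcongr; exact linfty_opNorm_mulVec _ _
    _ ≤ (∑ i, |w i|) * ‖(1 - N) ^ (K + 1)‖ := by
        gcongr; exact mul_le_of_le_one_right (norm_nonneg _) hv_norm
    _ ≤ (∑ i, |w i|) * ‖1 - N‖ ^ (K + 1) := by
        gcongr; exact norm_pow_le' _ K.succ_pos

/-- Theorem 1 (gate error mitigation bound): for a row vector `w`, a matrix `N` and a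
column vector `v` with `|v j| ≤ 1` for all `j`, with coefficients
`c_K(k) = (-1)^k * binom(K+1, k+1)`,
`|wᵀv - ∑_{k=1}^{K+1} c_K(k-1) wᵀ N^k v| ≤ (∑_i |w i|) * ‖I - N‖_∞^{K+1}`. -/
theorem gate_error_mitigation (d K : ℕ) (hd : 1 ≤ d)
    (N : Matrix (Fin d) (Fin d) ℝ) (w v : Fin d → ℝ) (hv : ∀ j, |v j| ≤ 1) :
    |(w ⬝ᵥ v) - ∑ k ∈ Finset.Icc 1 (K + 1),
        ((-1 : ℝ) ^ (k - 1) * ((K + 1).choose k : ℝ)) * (w ⬝ᵥ (N ^ k).mulVec v)|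
      ≤ (∑ i, |w i|) * matrixInfNorm (1 - N) ^ (K + 1) :=
  gate_error_mitigation_general d K N w v hv
end

section
/- Let d ≥ 1 and K ≥ 0 be integers. Let A be a d×d column-stochastic real matrix (all entries nonnegative and every column sums to 1), let v ∈ ℝ^d have nonnegative entries summing to 1, and let O : {1,…,d} → ℝ satisfy |O(x)| ≤ 1 for all x. Define ξ_m := 2(1 − min_x A_{xx}) and c_K(k) := (−1)^k · binom(K+1, k+1). Then |Σ_x O(x) v_x − Σ_{k=1}^{K+1} c_K(k−1) · Σ_x O(x) (A^k v)_x| ≤ ξ_m^{K+1}. (This is the measurement-error-mitigation bound of Theorem 2, with A the measurement error matrix, v the vector of diagonal entries of the state ρ, and O the diagonal observable.) -/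
/-!
By the binomial theorem the mitigated estimator differs from `O ⬝ᵥ v` by exactly
`O ⬝ᵥ ((1 - A) ^ (K + 1) *ᵥ v)`. For a column-stochastic `A`, column `j` of `1 - A` has `ℓ¹` norm
`2 (1 - A j j) ≤ ξ_m`, so `1 - A` scales the `ℓ¹` norm by at most `ξ_m`. Since `‖v‖₁ = 1` and
`|O x| ≤ 1`, the error is at most `ξ_m ^ (K + 1)`.
-/

open Finset Matrix

section Binomial

variable {R S : Type*} [CommRing R] [Ring S] [Algebra R S]

theorem one_sub_pow_eq_sum_range (a : S) (N : ℕ) :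
    (1 - a) ^ N = ∑ k ∈ range (N + 1), ((-1 : R) ^ k * N.choose k) • a ^ k := by
  rw [← neg_add_eq_sub, (Commute.one_right (-a)).add_pow]
  refine sum_congr rfl fun k _ => ?_
  rw [one_pow, mul_one, neg_pow, Algebra.smul_def, map_mul, map_pow, map_neg, map_one, map_natCast,
    mul_assoc, mul_assoc, (Nat.cast_commute _ _).eq]

theorem one_sub_pow_eq_one_sub_sum_Icc (a : S) (N : ℕ) :
    (1 - a) ^ N = 1 - ∑ k ∈ Icc 1 N, ((-1 : R) ^ (k - 1) * N.choose k) • a ^ k := by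
  rw [one_sub_pow_eq_sum_range (R := R), Nat.range_succ_eq_Icc_zero,
    ← insert_Icc_add_one_left_eq_Icc N.zero_le, sum_insert (by simp), sub_eq_add_neg,
    ← sum_neg_distrib]
  congr 1
  · simp
  · refine sum_congr rfl fun k hk => ?_
    obtain ⟨k, rfl⟩ := Nat.exists_eq_add_of_le' (mem_Icc.1 hk).1
    rw [Nat.add_sub_cancel, ← neg_smul, pow_succ]
    ring_nf

end Binomial

theorem dotProduct_one_sub_pow_mulVec {R n : Type*} [CommRing R] [Fintype n] [DecidableEq n]
    (A : Matrix n n R) (u v : n → R) (N : ℕ) :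
    u ⬝ᵥ ((1 - A) ^ N *ᵥ v) =
      u ⬝ᵥ v - ∑ k ∈ Icc 1 N, ((-1 : R) ^ (k - 1) * N.choose k) * u ⬝ᵥ (A ^ k *ᵥ v) := by
  simp [one_sub_pow_eq_one_sub_sum_Icc (R := R) A, sub_mulVec, sum_mulVec, smul_mulVec,
    dotProduct_sum]

section LOneNorm

variable {R m n : Type*} [CommRing R] [LinearOrder R] [IsStrictOrderedRing R]
  [Fintype m] [Fintype n]

theorem abs_dotProduct_le_sum_abs {u : n → R} (hu : ∀ i, |u i| ≤ 1) (w : n → R) :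
    |u ⬝ᵥ w| ≤ ∑ i, |w i| :=
  (abs_sum_le_sum_abs _ _).trans <| sum_le_sum fun i _ => by
    rw [abs_mul]
    exact mul_le_of_le_one_left (abs_nonneg _) (hu i)

theorem sum_abs_mulVec_le {B : Matrix m n R} {c : R} (hB : ∀ j, ∑ i, |B i j| ≤ c) (w : n → R) :
    ∑ i, |(B *ᵥ w) i| ≤ c * ∑ j, |w j| :=
  calc ∑ i, |(B *ᵥ w) i|
      ≤ ∑ i, ∑ j, |B i j| * |w j| := sum_le_sum fun i _ => by
        simpa only [mulVec, dotProduct, abs_mul] using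
          abs_sum_le_sum_abs (fun j => B i j * w j) univ
    _ = ∑ j, (∑ i, |B i j|) * |w j| := by simp only [sum_comm (γ := m), sum_mul]
    _ ≤ ∑ j, c * |w j| := by gcongr with j; exact hB j
    _ = c * ∑ j, |w j| := (mul_sum _ _ _).symm

theorem sum_abs_pow_mulVec_le [DecidableEq n] {B : Matrix n n R} {c : R} (hc : 0 ≤ c)
    (hB : ∀ j, ∑ i, |B i j| ≤ c) (k : ℕ) (w : n → R) :
    ∑ i, |(B ^ k *ᵥ w) i| ≤ c ^ k * ∑ j, |w j| := by
  induction k with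
  | zero => simp
  | succ k ih =>
    calc ∑ i, |(B ^ (k + 1) *ᵥ w) i|
        = ∑ i, |(B *ᵥ (B ^ k *ᵥ w)) i| := by rw [mulVec_mulVec, pow_succ']
      _ ≤ c * ∑ i, |(B ^ k *ᵥ w) i| := sum_abs_mulVec_le hB _
      _ ≤ c ^ (k + 1) * ∑ j, |w j| := by
        rw [pow_succ', mul_assoc]; exact mul_le_mul_of_nonneg_left ih hc

theorem sum_abs_one_sub_apply_of_mem_colStochastic [DecidableEq n] {M : Matrix n n R}
    (hM : M ∈ colStochastic R n) (j : n) : ∑ i, |(1 - M) i j| = 2 * (1 - M j j) := by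
  have habs : ∀ i, |(1 - M) i j| = (if i = j then 1 - 2 * M j j else 0) + M i j := by
    intro i
    by_cases hij : i = j
    · subst hij
      rw [Matrix.sub_apply, one_apply_eq, if_pos rfl,
        abs_of_nonneg (sub_nonneg.2 (le_one_of_mem_colStochastic hM))]
      ring
    · rw [Matrix.sub_apply, one_apply_ne hij, if_neg hij, zero_sub, abs_neg, zero_add,
        abs_of_nonneg (nonneg_of_mem_colStochastic hM)]
  rw [sum_congr rfl fun i _ => habs i, sum_add_distrib, sum_ite_eq' univ j, if_pos (mem_univ j),
    sum_col_of_mem_colStochastic hM]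
  ring

end LOneNorm

noncomputable def noiseResistance {n : Type*} [Fintype n] (A : Matrix n n ℝ) : ℝ :=
  2 * (1 - ⨅ x, A x x)

section NoiseResistance

variable {n : Type*} [Fintype n]

theorem two_mul_one_sub_diag_le_noiseResistance (A : Matrix n n ℝ) (j : n) :
    2 * (1 - A j j) ≤ noiseResistance A := by
  have := ciInf_le (Set.finite_range fun x => A x x).bddBelow j
  unfold noiseResistance
  linarith

theorem noiseResistance_nonneg [DecidableEq n] {A : Matrix n n ℝ} (hA : A ∈ colStochastic ℝ n) :
    0 ≤ noiseResistance A := by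
  cases isEmpty_or_nonempty n with
  | inl _ => simp [noiseResistance]
  | inr hn =>
    obtain ⟨j⟩ := hn
    linarith [two_mul_one_sub_diag_le_noiseResistance A j,
      le_one_of_mem_colStochastic hA (i := j) (j := j)]

end NoiseResistance

theorem measurement_error_mitigation_general (d K : ℕ)
    (A : Matrix (Fin d) (Fin d) ℝ)
    (hA_nonneg : ∀ i j, 0 ≤ A i j) (hA_col : ∀ j, ∑ i, A i j = 1)
    (v : Fin d → ℝ) (hv_nonneg : ∀ i, 0 ≤ v i) (hv_sum : ∑ i, v i = 1)
    (O : Fin d → ℝ) (hO : ∀ x, |O x| ≤ 1) :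
    |(∑ x, O x * v x) - ∑ k ∈ Finset.Icc 1 (K + 1),
        ((-1 : ℝ) ^ (k - 1) * ((K + 1).choose k : ℝ)) * ∑ x, O x * (A ^ k).mulVec v x|
      ≤ (2 * (1 - ⨅ x, A x x)) ^ (K + 1) := by
  have hA : A ∈ colStochastic ℝ (Fin d) := mem_colStochastic_iff_sum.2 ⟨hA_nonneg, hA_col⟩
  have hv : ∑ i, |v i| = 1 := by simpa only [abs_of_nonneg (hv_nonneg _)] using hv_sum
  have hcol : ∀ j, ∑ i, |(1 - A) i j| ≤ noiseResistance A := fun j =>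
    (sum_abs_one_sub_apply_of_mem_colStochastic hA j).trans_le
      (two_mul_one_sub_diag_le_noiseResistance A j)
  calc _ = |O ⬝ᵥ ((1 - A) ^ (K + 1) *ᵥ v)| := by rw [dotProduct_one_sub_pow_mulVec]; rfl
    _ ≤ ∑ i, |((1 - A) ^ (K + 1) *ᵥ v) i| := abs_dotProduct_le_sum_abs hO _
    _ ≤ noiseResistance A ^ (K + 1) * ∑ i, |v i| :=
      sum_abs_pow_mulVec_le (noiseResistance_nonneg hA) hcol _ _
    _ = (2 * (1 - ⨅ x, A x x)) ^ (K + 1) := by rw [hv, mul_one, noiseResistance]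

/-- Theorem 2 (measurement error mitigation bound): for a column-stochastic error
matrix `A`, a probability vector `v`, and a diagonal observable `O` with entries of
absolute value at most 1, with noise resistance `ξ_m = 2(1 - min_x A_{xx})` and
coefficients `c_K(k) = (-1)^k * binom(K+1, k+1)`,
`|∑_x O(x) v_x - ∑_{k=1}^{K+1} c_K(k-1) ∑_x O(x) (A^k v)_x| ≤ ξ_m^{K+1}`. -/
theorem measurement_error_mitigation (d K : ℕ) (hd : 1 ≤ d)
    (A : Matrix (Fin d) (Fin d) ℝ)
    (hA_nonneg : ∀ i j, 0 ≤ A i j) (hA_col : ∀ j, ∑ i, A i j = 1)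
    (v : Fin d → ℝ) (hv_nonneg : ∀ i, 0 ≤ v i) (hv_sum : ∑ i, v i = 1)
    (O : Fin d → ℝ) (hO : ∀ x, |O x| ≤ 1) :
    |(∑ x, O x * v x) - ∑ k ∈ Finset.Icc 1 (K + 1),
        ((-1 : ℝ) ^ (k - 1) * ((K + 1).choose k : ℝ)) * ∑ x, O x * (A ^ k).mulVec v x|
      ≤ (2 * (1 - ⨅ x, A x x)) ^ (K + 1) :=
  measurement_error_mitigation_general d K A hA_nonneg hA_col v hv_nonneg hv_sum O hO
end

section
/- For every γ ∈ [0,1], let T be the 4×4 real matrix with rows (1,0,0,0), (0,√(1−γ),0,0), (0,0,√(1−γ),0), (γ,0,0,1−γ) (the Pauli transfer matrix of the qubit amplitude damping channel 𝒜_γ). Then ‖I − T‖_∞ = 2γ, where ‖M‖_∞ := max_i Σ_j |M_{ij}| is the maximum absolute row sum. Hence the noise resistance of the amplitude damping channel is ξ_g(𝒜_γ) = 2γ. -/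
theorem matrixInfNorm_eq_of_le_of_eq {d : ℕ} {M : Matrix (Fin d) (Fin d) ℝ} {c : ℝ}
    (hle : ∀ i, ∑ j, |M i j| ≤ c) (i₀ : Fin d) (heq : ∑ j, |M i₀ j| = c) :
    matrixInfNorm M = c :=
  have : Nonempty (Fin d) := ⟨i₀⟩
  le_antisymm (ciSup_le hle)
    (heq ▸ le_ciSup (f := fun i => ∑ j, |M i j|) (Set.finite_range _).bddAbove i₀)

theorem one_sub_sqrt_one_sub_mem_Icc {γ : ℝ} (hγ : γ ∈ Set.Icc (0 : ℝ) 1) :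
    1 - Real.sqrt (1 - γ) ∈ Set.Icc 0 γ := by
  have hsqrt_le_one : Real.sqrt (1 - γ) ≤ 1 := Real.sqrt_le_one.mpr (by linarith [hγ.1])
  have hle_sqrt : 1 - γ ≤ Real.sqrt (1 - γ) := Real.le_sqrt_self_iff.mpr (by linarith [hγ.1])
  constructor <;> linarith

/-- The Pauli transfer matrix of the qubit amplitude damping channel `𝒜_γ`. -/
noncomputable def amplitudeDampingPTM (γ : ℝ) : Matrix (Fin 4) (Fin 4) ℝ :=
  Matrix.of
    ![![1, 0, 0, 0],
      ![0, Real.sqrt (1 - γ), 0, 0],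
      ![0, 0, Real.sqrt (1 - γ), 0],
      ![γ, 0, 0, 1 - γ]]

theorem sum_abs_one_sub_amplitudeDampingPTM {γ : ℝ} (hγ : γ ∈ Set.Icc (0 : ℝ) 1) (i : Fin 4) :
    ∑ j, |(1 - amplitudeDampingPTM γ) i j| =
      ![0, 1 - Real.sqrt (1 - γ), 1 - Real.sqrt (1 - γ), 2 * γ] i := by
  have hδ₀ := (one_sub_sqrt_one_sub_mem_Icc hγ).1
  fin_cases i <;>
    simp [amplitudeDampingPTM, Matrix.one_apply, Fin.sum_univ_four, abs_of_nonneg hγ.1,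
      abs_of_nonneg hδ₀, two_mul]

/-- The noise resistance of the qubit amplitude damping channel: its Pauli transfer
matrix `T` has rows `(1,0,0,0), (0,√(1-γ),0,0), (0,0,√(1-γ),0), (γ,0,0,1-γ)`, and
`‖I - T‖_∞ = 2γ`. -/
theorem amplitude_damping_noise_resistance (γ : ℝ) (hγ : γ ∈ Set.Icc (0 : ℝ) 1) :
    matrixInfNorm
      ((1 : Matrix (Fin 4) (Fin 4) ℝ) - Matrix.of
        ![![1, 0, 0, 0],
          ![0, Real.sqrt (1 - γ), 0, 0],
          ![0, 0, Real.sqrt (1 - γ), 0],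
          ![γ, 0, 0, 1 - γ]])
      = 2 * γ := by
  change matrixInfNorm (1 - amplitudeDampingPTM γ) = 2 * γ
  have hδγ := (one_sub_sqrt_one_sub_mem_Icc hγ).2
  refine matrixInfNorm_eq_of_le_of_eq (fun i => ?_) 3 (sum_abs_one_sub_amplitudeDampingPTM hγ 3)
  rw [sum_abs_one_sub_amplitudeDampingPTM hγ]
  fin_cases i <;> simp <;> linarith [hγ.1]
end
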